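/- For S = {132, 231, 321}, the exponential generating functions are T(x) = x/(1−x) for trees and F(x) = e^{x/(1−x)} for forests, and lim_{n→∞} f_n^{1/n}/n = 1/e. -/

import Mathlib

open Filter

/-- A rooted labeled forest on `Fin n`, encoded by its parent function together
with an acyclicity witness (a depth-like function decreasing along parents). -/
def IsForest (n : ℕ) (p : Fin n → Option (Fin n)) : Prop :=
  ∃ d : Fin n → ℕ, ∀ v w : Fin n, p v = some w → d w < d v

/-- The type of rooted labeled forests on `[n]`. -/
def Forest (n : ℕ) : Type := {p : Fin n → Option (Fin n) // IsForest n p}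

/-- `F.Ancestor a b` means `a` is a strict ancestor of `b` in the forest `F`. -/
def Forest.Ancestor {n : ℕ} (F : Forest n) (a b : Fin n) : Prop :=
  Relation.TransGen (fun x y : Fin n => F.val x = some y) b a

/-- A forest is a tree when it has exactly one root. -/
def Forest.IsTree {n : ℕ} (F : Forest n) : Prop :=
  ∃! v : Fin n, F.val v = none

/-- A pattern: a permutation of `Fin k` for some `k`. -/
abbrev Pattern : Type := Σ k : ℕ, Equiv.Perm (Fin k)

/-- `F` contains an instance of the pattern `π`: a chain of vertices, each an
ancestor of the next, whose labels are in the same relative order as `π`. -/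
def Forest.Contains {n : ℕ} (F : Forest n) (π : Pattern) : Prop :=
  ∃ v : Fin π.1 → Fin n,
    (∀ i j : Fin π.1, i < j → F.Ancestor (v i) (v j)) ∧
    (∀ i j : Fin π.1, π.2 i < π.2 j ↔ v i < v j)

/-- `F` avoids every pattern in `S`. -/
def Forest.AvoidsSet {n : ℕ} (F : Forest n) (S : Set Pattern) : Prop :=
  ∀ π ∈ S, ¬ F.Contains π

/-- The number of rooted labeled forests on `[n]` avoiding `S`. -/
noncomputable def forestCount (S : Set Pattern) (n : ℕ) : ℕ :=
  Nat.card {F : Forest n // F.AvoidsSet S}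

/-- The number of rooted labeled trees on `[n]` avoiding `S`. -/
noncomputable def treeCount (S : Set Pattern) (n : ℕ) : ℕ :=
  Nat.card {F : Forest n // F.IsTree ∧ F.AvoidsSet S}
/-- The pattern 213 (one-line notation, as a permutation of `Fin 3`). -/
noncomputable def p213 : Equiv.Perm (Fin 3) := Equiv.ofBijective ![1, 0, 2] (by decide)
/-- The pattern 231. -/
noncomputable def p231 : Equiv.Perm (Fin 3) := Equiv.ofBijective ![1, 2, 0] (by decide)
/-- The pattern 312. -/
noncomputable def p312 : Equiv.Perm (Fin 3) := Equiv.ofBijective ![2, 0, 1] (by decide)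
/-- The pattern 321. -/
noncomputable def p321 : Equiv.Perm (Fin 3) := Equiv.ofBijective ![2, 1, 0] (by decide)
/-- The pattern 132. -/
noncomputable def p132 : Equiv.Perm (Fin 3) := Equiv.ofBijective ![0, 2, 1] (by decide)

/-!
The patterns 132, 231 and 321 are exactly the patterns of length 3 ending in a descent. A forest
avoids them iff every non-root parent has a smaller label than its children: a non-root parent
`w > v` of `v`, together with the parent of `w`, is an occurrence of one of them, while along an
ancestor chain every non-root vertex is smaller than all its descendants.

Such a forest with root set `R`, `#R = k`, is obtained by letting each non-root choose its parent
among `R` and the smaller non-roots, in `k (k + 1) ⋯ (n - 1)` ways; so `t_n = n!` and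
`f_n = ∑ₖ C(n, k) k^(n-k)` (rising factorial). Expanding `(1 - x)⁻ᵏ` gives
`e^{x/(1-x)} = ∑ₖ xᵏ/k! ∑ₘ k^(m) xᵐ/m!`, whose terms regroup by `n = k + m` into `f_n xⁿ/n!`.
Finally, convergence of this series on `(-1, 1)` and `f_n ≥ n!` give `(f_n/n!)^{1/n} → 1`, and
Stirling's formula gives `(n!)^{1/n}/n → 1/e`.
-/

open Finset
open scoped Nat

abbrev S₃ : Set Pattern := {⟨3, p132⟩, ⟨3, p231⟩, ⟨3, p321⟩}

def NonRootParentLT (n : ℕ) (p : Fin n → Option (Fin n)) : Prop :=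
  ∀ v w : Fin n, p v = some w → p w = none ∨ w < v

instance (n : ℕ) : DecidablePred (NonRootParentLT n) := fun p => by
  unfold NonRootParentLT; infer_instance

lemma isForest_of_nonRootParentLT {n : ℕ} {p : Fin n → Option (Fin n)}
    (hp : NonRootParentLT n p) : IsForest n p :=
  ⟨fun v => if p v = none then 0 else v + 1, fun v w hvw => by
    simp only [hvw, reduceCtorEq, if_false]
    split_ifs with hw
    · omega
    · have := (hp v w hvw).resolve_left hw
      omega⟩

namespace Forest

variable {n : ℕ}

lemma ne_of_ancestor (F : Forest n) {a b : Fin n} (h : F.Ancestor a b) : a ≠ b := by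
  obtain ⟨d, hd⟩ := F.prop
  have hlt : d a < d b := by
    induction h with
    | single hba => exact hd _ _ hba
    | tail _ hca ih => exact (hd _ _ hca).trans ih
  exact fun hab => (hab ▸ hlt).false

lemma exists_parent_of_ancestor (F : Forest n) {a b : Fin n} (h : F.Ancestor a b) :
    ∃ u, F.val b = some u := by
  obtain ⟨u, hu, -⟩ := Relation.TransGen.head'_iff.mp h
  exact ⟨u, hu⟩

lemma lt_of_ancestor (F : Forest n) (hF : NonRootParentLT n F.val) {a b : Fin n}
    (h : F.Ancestor a b) (ha : F.val a ≠ none) : a < b := by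
  induction h using Relation.TransGen.head_induction_on with
  | single hba => exact (hF _ _ hba).resolve_left ha
  | head hbc hca ih =>
    obtain ⟨u, hu⟩ := F.exists_parent_of_ancestor hca
    exact ih.trans ((hF _ _ hbc).resolve_left (by simp [hu]))

lemma not_contains_of_nonRootParentLT (F : Forest n) (hF : NonRootParentLT n F.val)
    (σ : Equiv.Perm (Fin 3)) (hσ : σ 2 < σ 1) : ¬ F.Contains ⟨3, σ⟩ := by
  rintro ⟨v, hanc, hord⟩
  obtain ⟨u, hu⟩ := F.exists_parent_of_ancestor (hanc 0 1 (by decide : (0 : Fin 3) < 1))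
  have hlt := F.lt_of_ancestor hF (hanc 1 2 (by decide : (1 : Fin 3) < 2)) (by simp [hu])
  exact hlt.not_gt ((hord 2 1).mp hσ)

lemma contains_of_ancestor_chain (F : Forest n) {u w v : Fin n} (huw : F.Ancestor u w)
    (hwv : F.Ancestor w v) (σ : Equiv.Perm (Fin 3))
    (hσ : ∀ i j, σ i < σ j ↔ ![u, w, v] i < ![u, w, v] j) : F.Contains ⟨3, σ⟩ :=
  ⟨![u, w, v], fun i j hij => by
    fin_cases i <;> fin_cases j <;> simp at hij ⊢ <;>
      first | exact huw | exact hwv | exact hwv.trans huw,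
    hσ⟩

lemma avoidsSet_iff (F : Forest n) : F.AvoidsSet S₃ ↔ NonRootParentLT n F.val := by
  refine ⟨fun h v w hvw => ?_, fun hF π hπ => ?_⟩
  · by_contra! ⟨hw, hvw_le⟩
    obtain ⟨u, hu⟩ := Option.ne_none_iff_exists'.mp hw
    have hwv : F.Ancestor w v := .single hvw
    have huw : F.Ancestor u w := .single hu
    have hvw_lt : v < w := lt_of_le_of_ne hvw_le (F.ne_of_ancestor hwv).symm
    have contains := F.contains_of_ancestor_chain huw hwv
    rcases lt_or_gt_of_ne (F.ne_of_ancestor (hwv.trans huw)) with huv | hvu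
    · refine h _ (by simp) (contains p132 ?_)
      intro i j; fin_cases i <;> fin_cases j <;> simp [p132, Equiv.ofBijective] <;> omega
    rcases lt_or_gt_of_ne (F.ne_of_ancestor huw) with huw' | hwu
    · refine h _ (by simp) (contains p231 ?_)
      intro i j; fin_cases i <;> fin_cases j <;> simp [p231, Equiv.ofBijective] <;> omega
    · refine h _ (by simp) (contains p321 ?_)
      intro i j; fin_cases i <;> fin_cases j <;> simp [p321, Equiv.ofBijective] <;> omega
  · rcases hπ with rfl | rfl | rfl
    · exact F.not_contains_of_nonRootParentLT hF p132 (by simp [p132, Equiv.ofBijective])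
    · exact F.not_contains_of_nonRootParentLT hF p231 (by simp [p231, Equiv.ofBijective])
    · exact F.not_contains_of_nonRootParentLT hF p321 (by simp [p321, Equiv.ofBijective])

def subtypeEquivOfIsForest {Q : (Fin n → Option (Fin n)) → Prop}
    (hQ : ∀ p, Q p → IsForest n p) : {F : Forest n // Q F.val} ≃ {p // Q p} :=
  (Equiv.subtypeSubtypeEquivSubtypeInter (IsForest n) Q).trans
    (Equiv.subtypeEquivRight fun p => and_iff_right_of_imp (hQ p))

end Forest

lemma Finset.prod_add_card_filter_lt {α : Type*} [LinearOrder α] (s : Finset α) (k : ℕ) :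
    ∏ v ∈ s, (k + #{u ∈ s | u < v}) = k.ascFactorial #s := by
  induction s using Finset.induction_on_max with
  | empty => simp
  | insert a s ha ih =>
    have hnot : a ∉ s := fun h => (ha a h).false
    have hbelow : {u ∈ insert a s | u < a} = s := by
      ext u; simp only [mem_filter, mem_insert]
      exact ⟨fun ⟨h, hu⟩ => h.resolve_left hu.ne, fun h => ⟨Or.inr h, ha u h⟩⟩
    have hrest : ∀ v ∈ s, {u ∈ insert a s | u < v} = {u ∈ s | u < v} := fun v hv => by
      rw [filter_insert, if_neg (ha v hv).not_gt]
    rw [prod_insert hnot, hbelow, prod_congr rfl fun v hv => by rw [hrest v hv], ih,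
      card_insert_of_notMem hnot, Nat.ascFactorial_succ]

section Counting

variable {n : ℕ}

def roots (p : Fin n → Option (Fin n)) : Finset (Fin n) := {v | p v = none}

lemma filter_nonRootParentLT_roots_eq (R : Finset (Fin n)) :
    ({p | NonRootParentLT n p ∧ roots p = R} : Finset (Fin n → Option (Fin n))) =
      Fintype.piFinset fun v => if v ∈ R then {none} else (R ∪ {u ∈ Rᶜ | u < v}).map .some := by
  ext p
  simp only [mem_filter, mem_univ, true_and, Fintype.mem_piFinset]
  have hroots : roots p = R ↔ ∀ v, p v = none ↔ v ∈ R := by simp [roots, Finset.ext_iff]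
  rw [hroots]
  constructor
  · rintro ⟨hp, hR⟩ v
    split_ifs with hv
    · simpa [hR]
    · obtain ⟨w, hw⟩ := Option.ne_none_iff_exists'.mp (mt (hR v).mp hv)
      rcases hp v w hw with h | h <;> by_cases hwR : w ∈ R <;> simp_all
  · intro h
    have hR : ∀ v, p v = none ↔ v ∈ R := fun v => by
      have hv := h v
      split_ifs at hv with hvR
      · simpa [hvR] using hv
      · obtain ⟨w, -, hw⟩ := Finset.mem_map.mp hv
        simp [hvR, ← hw]
    refine ⟨fun v w hvw => ?_, hR⟩
    have hv := h v
    rw [if_neg (by rw [← hR, hvw]; simp)] at hv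
    simp only [hvw, Finset.mem_map, mem_union, mem_filter, mem_compl, Option.some.injEq,
      Function.Embedding.some_apply, exists_eq_right] at hv
    rcases hv with hw | hw
    · exact .inl ((hR w).mpr hw)
    · exact .inr hw.2

lemma card_filter_roots_eq (R : Finset (Fin n)) :
    #{p : Fin n → Option (Fin n) | NonRootParentLT n p ∧ roots p = R} =
      (#R).ascFactorial (n - #R) := by
  have hchoices : ∀ v, #(if v ∈ R then {none} else (R ∪ {u ∈ Rᶜ | u < v}).map .some) =
      if v ∈ Rᶜ then #R + #{u ∈ Rᶜ | u < v} else 1 := fun v => by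
    by_cases hv : v ∈ R
    · simp [hv]
    · rw [if_neg hv, if_pos (mem_compl.mpr hv), card_map, card_union_of_disjoint
        (disjoint_left.mpr fun u hu h => mem_compl.mp (mem_filter.mp h).1 hu)]
  rw [filter_nonRootParentLT_roots_eq, Fintype.card_piFinset,
    prod_congr rfl fun v _ => hchoices v, prod_ite_mem, univ_inter, prod_add_card_filter_lt,
    card_compl, Fintype.card_fin]

lemma card_filter_roots_mem (𝓡 : Finset (Finset (Fin n))) :
    #({p | NonRootParentLT n p ∧ roots p ∈ 𝓡} : Finset (Fin n → Option (Fin n))) =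
      ∑ R ∈ 𝓡, (#R).ascFactorial (n - #R) := by
  rw [card_eq_sum_card_fiberwise (f := roots) (t := 𝓡) fun p hp => (mem_filter.mp hp).2.2]
  refine sum_congr rfl fun R hR => ?_
  rw [filter_filter, ← card_filter_roots_eq R]
  congr 1
  exact filter_congr fun p _ => ⟨fun h => ⟨h.1.1, h.2⟩, fun h => ⟨⟨h.1, h.2 ▸ hR⟩, h.2⟩⟩

lemma natCard_avoidsSet_roots_mem (𝓡 : Finset (Finset (Fin n))) :
    Nat.card {F : Forest n // F.AvoidsSet S₃ ∧ roots F.val ∈ 𝓡} =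
      ∑ R ∈ 𝓡, (#R).ascFactorial (n - #R) := by
  rw [← card_filter_roots_mem, ← Fintype.card_subtype, ← Nat.card_eq_fintype_card]
  exact Nat.card_congr <| (Equiv.subtypeEquivRight fun F => by rw [F.avoidsSet_iff]).trans
    (Forest.subtypeEquivOfIsForest fun _ h => isForest_of_nonRootParentLT h.1)

lemma forestCount_S₃ (n : ℕ) :
    forestCount S₃ n = ∑ p ∈ antidiagonal n, n.choose p.1 * p.1.ascFactorial p.2 := by
  have hall : ∀ F : Forest n, F.AvoidsSet S₃ ↔ F.AvoidsSet S₃ ∧ roots F.val ∈ univ.powerset :=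
    fun F => by simp
  rw [forestCount, Nat.card_congr (Equiv.subtypeEquivRight hall), natCard_avoidsSet_roots_mem,
    sum_powerset_apply_card (fun k => k.ascFactorial (n - k)), card_univ, Fintype.card_fin,
    Nat.sum_antidiagonal_eq_sum_range_succ (fun k m => n.choose k * k.ascFactorial m)]
  simp only [smul_eq_mul]

lemma card_roots_eq_one_iff (p : Fin n → Option (Fin n)) :
    #(roots p) = 1 ↔ ∃! v, p v = none := by
  simp [card_eq_one, roots, Finset.eq_singleton_iff_unique_mem, ExistsUnique]

lemma treeCount_S₃ (n : ℕ) : treeCount S₃ n = n * (n - 1)! := by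
  have htree : ∀ F : Forest n, F.IsTree ∧ F.AvoidsSet S₃ ↔
      F.AvoidsSet S₃ ∧ roots F.val ∈ powersetCard 1 univ := fun F => by
    rw [mem_powersetCard_univ, card_roots_eq_one_iff, Forest.IsTree, and_comm]
  rw [treeCount, Nat.card_congr (Equiv.subtypeEquivRight htree), natCard_avoidsSet_roots_mem,
    sum_congr rfl fun R hR => by rw [(mem_powersetCard_univ.mp hR)], sum_const, card_powersetCard,
    card_univ, Fintype.card_fin, Nat.choose_one_right, Nat.one_ascFactorial, smul_eq_mul]

end Counting

lemma hasSum_ascFactorial_mul_pow_div_factorial (k : ℕ) {x : ℝ} (hx : |x| < 1) :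
    HasSum (fun m => k.ascFactorial m * x ^ m / m !) ((1 - x)⁻¹ ^ k) := by
  cases k with
  | zero =>
    have hterm : (fun m => (0 : ℕ).ascFactorial m * x ^ m / m ! : ℕ → ℝ) =
        fun m => if m = 0 then 1 else 0 := by
      funext m
      cases m <;> simp [Nat.zero_ascFactorial]
    rw [hterm, pow_zero]
    exact hasSum_ite_eq 0 1
  | succ k =>
    have hterm : (fun m => (k + 1).ascFactorial m * x ^ m / m ! : ℕ → ℝ) =
        fun m => (m + k).choose k * x ^ m := by
      funext m
      rw [Nat.ascFactorial_eq_factorial_mul_choose, add_comm k m]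
      push_cast
      rw [Nat.choose_symm_add]
      field_simp
    rw [hterm, inv_pow, ← one_div]
    exact hasSum_choose_mul_geometric_of_norm_lt_one k (by rwa [Real.norm_eq_abs])

lemma HasSum.sum_antidiagonal {M : Type*} [AddCommMonoid M] [TopologicalSpace M] [ContinuousAdd M]
    [RegularSpace M] {f : ℕ × ℕ → M} {a : M} (hf : HasSum f a) :
    HasSum (fun n => ∑ p ∈ antidiagonal n, f p) a :=
  (HasAntidiagonal.sigmaAntidiagonalEquivProd.hasSum_iff.mpr hf).sigma fun n =>
    (antidiagonal n).hasSum f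

lemma hasSum_exp_div_one_sub_prod {x : ℝ} (hx : |x| < 1) :
    HasSum (fun p : ℕ × ℕ => x ^ p.1 / p.1 ! * (p.1.ascFactorial p.2 * x ^ p.2 / p.2 !))
      (Real.exp (x / (1 - x))) := by
  have hrow : ∀ {x : ℝ}, |x| < 1 → ∀ k : ℕ,
      HasSum (fun m => x ^ k / k ! * (k.ascFactorial m * x ^ m / m !)) ((x / (1 - x)) ^ k / k !) :=
    fun {y} hy k => by
      rw [show (y / (1 - y)) ^ k / k ! = y ^ k / k ! * (1 - y)⁻¹ ^ k by ring]
      exact (hasSum_ascFactorial_mul_pow_div_factorial k hy).mul_left _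
  have habs : |(|x|)| < 1 := by rwa [abs_abs]
  have hsummable :
      Summable fun p : ℕ × ℕ => x ^ p.1 / p.1 ! * (p.1.ascFactorial p.2 * x ^ p.2 / p.2 !) := by
    refine Summable.of_norm ?_
    simp only [norm_mul, norm_div, norm_pow, Real.norm_eq_abs, Nat.abs_cast]
    refine (summable_prod_of_nonneg fun p => by positivity).mpr
      ⟨fun k => (hrow habs k).summable, ?_⟩
    simp only [fun k => (hrow habs k).tsum_eq]
    exact Real.summable_pow_div_factorial _
  have hexp : HasSum (fun k => (x / (1 - x)) ^ k / k !) (Real.exp (x / (1 - x))) := by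
    rw [Real.exp_eq_exp_ℝ]
    exact NormedSpace.expSeries_div_hasSum_exp _
  rw [hexp.unique (hsummable.hasSum.prod_fiberwise (hrow hx))]
  exact hsummable.hasSum

lemma hasSum_forestCount_S₃ {x : ℝ} (hx : |x| < 1) :
    HasSum (fun n => (forestCount S₃ n : ℝ) * x ^ n / n !) (Real.exp (x / (1 - x))) := by
  have hterm : ∀ n, (forestCount S₃ n : ℝ) * x ^ n / n ! =
      ∑ p ∈ antidiagonal n, x ^ p.1 / p.1 ! * (p.1.ascFactorial p.2 * x ^ p.2 / p.2 !) := by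
    intro n
    rw [forestCount_S₃, Nat.cast_sum, sum_mul, sum_div]
    refine sum_congr rfl fun ⟨k, m⟩ hkm => ?_
    obtain rfl : k + m = n := mem_antidiagonal.mp hkm
    have hfact := Nat.add_choose_mul_factorial_mul_factorial m k
    rw [add_comm m k] at hfact
    have hchoose : ((k + m).choose k : ℝ) ≠ 0 := by
      exact_mod_cast (Nat.choose_pos (by omega)).ne'
    rw [← hfact]
    push_cast
    field_simp
    ring
  rw [funext hterm]
  exact (hasSum_exp_div_one_sub_prod hx).sum_antidiagonal

lemma hasSum_treeCount_S₃ {x : ℝ} (hx : |x| < 1) :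
    HasSum (fun n => (treeCount S₃ n : ℝ) * x ^ n / n !) (x / (1 - x)) := by
  refine (hasSum_nat_add_iff' 1).mp ?_
  have hterm : ∀ n, (treeCount S₃ (n + 1) : ℝ) * x ^ (n + 1) / (n + 1)! = x * x ^ n := by
    intro n
    rw [treeCount_S₃, Nat.add_sub_cancel, ← Nat.factorial_succ, pow_succ']
    field_simp
  have hzero : treeCount S₃ 0 = 0 := by rw [treeCount_S₃, zero_mul]
  simp only [hterm, sum_range_one, hzero, Nat.cast_zero, zero_mul, zero_div, sub_zero]
  rw [div_eq_mul_inv]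
  exact (hasSum_geometric_of_abs_lt_one hx).mul_left x

lemma tendsto_rpow_inv_natCast_of_one_le {a : ℕ → ℝ} (h1 : ∀ᶠ n in atTop, 1 ≤ a n)
    (h2 : ∀ r : ℝ, 0 < r → r < 1 → Tendsto (fun n => a n * r ^ n) atTop (nhds 0)) :
    Tendsto (fun n : ℕ => a n ^ (n : ℝ)⁻¹) atTop (nhds 1) := by
  rw [tendsto_order]
  refine ⟨fun c hc => h1.mono fun n hn => hc.trans_le (Real.one_le_rpow hn (by positivity)),
    fun c hc => ?_⟩
  obtain ⟨b, hb1, hbc⟩ := exists_between hc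
  have hb0 : 0 < b := by linarith
  filter_upwards [h1, eventually_ne_atTop 0,
    (h2 b⁻¹ (inv_pos.mpr hb0) (inv_lt_one_of_one_lt₀ hb1)).eventually (gt_mem_nhds one_pos)]
    with n ha hn hlt
  rw [inv_pow, ← div_eq_mul_inv, div_lt_one (by positivity)] at hlt
  calc a n ^ (n : ℝ)⁻¹ < (b ^ n) ^ (n : ℝ)⁻¹ := Real.rpow_lt_rpow (by linarith) hlt (by positivity)
    _ = b := Real.pow_rpow_inv_natCast hb0.le hn
    _ < c := hbc

lemma tendsto_factorial_div_pow_rpow_inv :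
    Tendsto (fun n : ℕ => (n ! / (n / Real.exp 1) ^ n : ℝ) ^ (n : ℝ)⁻¹) atTop (nhds 1) := by
  refine tendsto_rpow_inv_natCast_of_one_le ?_ fun r hr0 hr1 => ?_
  · filter_upwards [eventually_ne_atTop 0] with n hn
    have h := Real.pow_div_factorial_le_exp (n : ℝ) (by positivity) n
    rw [one_le_div (by positivity), div_pow, div_le_iff₀ (by positivity), Real.exp_one_pow]
    rwa [div_le_iff₀ (by positivity), mul_comm] at h
  · have hsqrt : Tendsto (fun n : ℕ => √(2 * n) * r ^ n) atTop (nhds 0) := by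
      have hlin := (tendsto_self_mul_const_pow_of_lt_one hr0.le hr1).const_mul 2
      rw [mul_zero] at hlin
      refine squeeze_zero' (.of_forall fun n => by positivity) ?_ hlin
      filter_upwards [eventually_ne_atTop 0] with n hn
      rw [← mul_assoc]
      gcongr
      exact Real.sqrt_le_self_iff.mpr (.inr (by norm_cast; omega))
    have hlim := Stirling.tendsto_stirlingSeq_sqrt_pi.mul hsqrt
    rw [mul_zero] at hlim
    refine hlim.congr' ?_
    filter_upwards [eventually_ne_atTop 0] with n hn
    -- `n! / (n / e) ^ n = stirlingSeq n * √(2n)`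
    simp only [Stirling.stirlingSeq]
    field_simp

lemma factorial_le_forestCount_S₃ {n : ℕ} (hn : n ≠ 0) : n ! ≤ forestCount S₃ n := by
  have hmem : ((1, n - 1) : ℕ × ℕ) ∈ antidiagonal n := by
    rw [HasAntidiagonal.mem_antidiagonal]
    omega
  calc n ! = n.choose 1 * (1 : ℕ).ascFactorial (n - 1) := by
        rw [Nat.choose_one_right, Nat.one_ascFactorial, Nat.mul_factorial_pred hn]
    _ ≤ forestCount S₃ n := by
        rw [forestCount_S₃]
        exact single_le_sum (f := fun p : ℕ × ℕ => n.choose p.1 * p.1.ascFactorial p.2)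
          (fun _ _ => Nat.zero_le _) hmem

lemma tendsto_forestCount_div_factorial_rpow_inv :
    Tendsto (fun n : ℕ => (forestCount S₃ n / n ! : ℝ) ^ (n : ℝ)⁻¹) atTop (nhds 1) := by
  refine tendsto_rpow_inv_natCast_of_one_le ?_ fun r hr0 hr1 => ?_
  · filter_upwards [eventually_ne_atTop 0] with n hn
    rw [one_le_div (by positivity)]
    exact_mod_cast factorial_le_forestCount_S₃ hn
  · have h := (hasSum_forestCount_S₃ (abs_lt.mpr ⟨by linarith, hr1⟩)).summable.tendsto_atTop_zero
    simpa only [div_mul_eq_mul_div] using h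

lemma tendsto_forestCount_rpow_inv_div :
    Tendsto (fun n : ℕ => (forestCount S₃ n : ℝ) ^ (n : ℝ)⁻¹ / n) atTop
      (nhds (Real.exp 1)⁻¹) := by
  have hlim := (tendsto_forestCount_div_factorial_rpow_inv.mul
    tendsto_factorial_div_pow_rpow_inv).mul_const (Real.exp 1)⁻¹
  rw [one_mul, one_mul] at hlim
  refine hlim.congr' ?_
  filter_upwards [eventually_ne_atTop 0] with n hn
  rw [← Real.mul_rpow (by positivity) (by positivity), div_mul_div_cancel₀ (by positivity),
    Real.div_rpow (by positivity) (by positivity), Real.pow_rpow_inv_natCast (by positivity) hn]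
  field_simp

/-- For `S = {132, 231, 321}`: the EGF of trees is `x/(1-x)`, the EGF of
forests is `e^{x/(1-x)}`, and the forest Stanley–Wilf limit is `1/e`. -/
theorem egf_132_231_321 :
    (∀ x : ℝ, |x| < 1 →
      ∑' n : ℕ, (treeCount {⟨3, p132⟩, ⟨3, p231⟩, ⟨3, p321⟩} n : ℝ) * x ^ n /
          Nat.factorial n = x / (1 - x)) ∧
    (∀ x : ℝ, |x| < 1 →
      ∑' n : ℕ, (forestCount {⟨3, p132⟩, ⟨3, p231⟩, ⟨3, p321⟩} n : ℝ) * x ^ n /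
          Nat.factorial n = Real.exp (x / (1 - x))) ∧
    Tendsto
      (fun n : ℕ =>
        (forestCount {⟨3, p132⟩, ⟨3, p231⟩, ⟨3, p321⟩} n : ℝ) ^ ((n : ℝ)⁻¹) / n)
      atTop (nhds (Real.exp 1)⁻¹) :=
  ⟨fun _ hx => (hasSum_treeCount_S₃ hx).tsum_eq, fun _ hx => (hasSum_forestCount_S₃ hx).tsum_eq,
    tendsto_forestCount_rpow_inv_div⟩
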